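/- Oscillation bound for the level set of the distance function: let n ≥ 2 and let E ⊆ ℝⁿ satisfy {x_n ≤ −γ} ∩ K_r ⊆ E ∩ K_r ⊆ {x_n ≤ γ} ∩ K_r for some r > γ > 0. Let δ ∈ (0, r/4) and S^− = {x ∈ ℝⁿ : d_E(x) = −δ}. There exists c ∈ (0,1), depending only on n, such that if γ/δ < c then for all x, z ∈ S^− ∩ K_{r−2δ} one has x_n − z_n ≤ 100 √(γ/δ) |x' − z'|. -/

import Mathlib

open MeasureTheory Metric Set Filter
open scoped ENNReal NNReal RealInnerProductSpace

noncomputable section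

/-- `ℝⁿ` realized as `ℝ^{n-1} × ℝ`, equipped with the Euclidean (`L²`) norm:
points are written `x = (x', xₙ)`. -/
abbrev Rsp (d : ℕ) := WithLp 2 (EuclideanSpace ℝ (Fin d) × ℝ)

instance (d : ℕ) : MeasurableSpace (Rsp d) :=
  (WithLp.measurableSpace 2 (EuclideanSpace ℝ (Fin d) × ℝ))

instance (d : ℕ) : BorelSpace (Rsp d) :=
  (WithLp.borelSpace 2 (EuclideanSpace ℝ (Fin d)) ℝ)

instance (d : ℕ) : MeasureSpace (Rsp d) :=
  ⟨(volume : Measure (EuclideanSpace ℝ (Fin d) × ℝ)).map (WithLp.toLp 2)⟩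

/-- The horizontal component `x'` of a point `x = (x', xₙ) ∈ ℝⁿ`. -/
def px {d : ℕ} (x : Rsp d) : EuclideanSpace ℝ (Fin d) := (WithLp.equiv 2 _ x).1

/-- The vertical component `xₙ` of a point `x = (x', xₙ) ∈ ℝⁿ`. -/
def pt {d : ℕ} (x : Rsp d) : ℝ := (WithLp.equiv 2 _ x).2

/-- The open cylinder `K_ρ = {|x'| < ρ} × {|xₙ| < ρ}`. -/
def Kc (d : ℕ) (ρ : ℝ) : Set (Rsp d) := {x : Rsp d | ‖px x‖ < ρ ∧ |pt x| < ρ}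

open Classical in
/-- The signed distance to `E`, nonnegative outside `E`. -/
def sdist {d : ℕ} (E : Set (Rsp d)) (x : Rsp d) : ℝ :=
  if x ∈ E then -Metric.infDist x Eᶜ else Metric.infDist x E

/-! ### auxiliary lemmas -/


lemma Rsp.norm_sq {d : ℕ} (v : Rsp d) : ‖v‖ ^ 2 = ‖px v‖ ^ 2 + (pt v) ^ 2 := by
  have := WithLp.prod_norm_sq_eq_of_L2 v
  simpa [px, pt, sq_abs, Real.norm_eq_abs] using this

lemma Rsp.dist_sq {d : ℕ} (a b : Rsp d) :
    dist a b ^ 2 = ‖px a - px b‖ ^ 2 + (pt a - pt b) ^ 2 := by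
  rw [dist_eq_norm]
  exact Rsp.norm_sq (a - b)

lemma Rsp.px_dist_le {d : ℕ} (a b : Rsp d) : ‖px a - px b‖ ≤ dist a b := by
  have h := Rsp.dist_sq a b
  have h1 := dist_nonneg (x := a) (y := b)
  have h2 := norm_nonneg (px a - px b)
  nlinarith [sq_nonneg (pt a - pt b)]

lemma Rsp.pt_dist_le {d : ℕ} (a b : Rsp d) : |pt a - pt b| ≤ dist a b := by
  have h := Rsp.dist_sq a b
  have h1 := dist_nonneg (x := a) (y := b)
  have h2 := abs_nonneg (pt a - pt b)
  nlinarith [sq_nonneg ‖px a - px b‖, sq_abs (pt a - pt b)]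

noncomputable def mkR {d : ℕ} (a : EuclideanSpace ℝ (Fin d)) (b : ℝ) : Rsp d :=
  (WithLp.equiv 2 _).symm (a, b)

lemma Rsp.px_mkR {d : ℕ} (a : EuclideanSpace ℝ (Fin d)) (b : ℝ) : px (mkR a b) = a := rfl
lemma Rsp.pt_mkR {d : ℕ} (a : EuclideanSpace ℝ (Fin d)) (b : ℝ) : pt (mkR a b) = b := rfl

/-- If `sdist E p = -δ` with `δ > 0`, then `p ∈ E` and `infDist p Eᶜ = δ`. -/
lemma level_inf {d : ℕ} {E : Set (Rsp d)} {δ : ℝ} (hδ : 0 < δ) {p : Rsp d}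
    (hp : sdist E p = -δ) : p ∈ E ∧ Metric.infDist p Eᶜ = δ := by
  by_cases hpE : p ∈ E
  · refine ⟨hpE, ?_⟩
    rw [sdist, if_pos hpE] at hp
    linarith
  · rw [sdist, if_neg hpE] at hp
    have := Metric.infDist_nonneg (s := E) (x := p)
    linarith

/-- Slab bound and existence of an exact witness in `closure Eᶜ`. -/
lemma slab_and_witness {d : ℕ} {E : Set (Rsp d)} {γ r δ : ℝ} (hγ : 0 < γ)
    (hδ : 0 < δ) (hδr : δ < r / 4)
    (hlow : {x : Rsp d | pt x ≤ -γ} ∩ Kc d r ⊆ E ∩ Kc d r)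
    (hup : E ∩ Kc d r ⊆ {x : Rsp d | pt x ≤ γ} ∩ Kc d r)
    {p : Rsp d} (hpS : sdist E p = -δ) (hpK : p ∈ Kc d (r - 2 * δ)) :
    pt p ≤ γ - δ ∧ ∃ y ∈ closure Eᶜ, dist p y = δ ∧ -γ ≤ pt y := by
  obtain ⟨hpE, hinf⟩ := level_inf hδ hpS
  obtain ⟨hpK1, hpK2⟩ := hpK
  have hr : 0 < r := by linarith
  -- points at distance < δ of p are in E
  have hball : ∀ q : Rsp d, dist p q < δ → q ∈ E := by
    intro q hq
    by_contra hqE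
    have := Metric.infDist_le_dist_of_mem (x := p) (show q ∈ Eᶜ from hqE)
    linarith [hinf ▸ this]
  -- Eᶜ nonempty
  have hcne : Eᶜ.Nonempty := by
    by_contra hne
    rw [not_nonempty_iff_eq_empty] at hne
    rw [hne, Metric.infDist_empty] at hinf
    linarith
  constructor
  · -- upper bound pt p ≤ γ - δ
    have key : ∀ t : ℝ, 0 ≤ t → t < δ → pt p + t ≤ γ := by
      intro t ht0 htδ
      set q : Rsp d := mkR (px p) (pt p + t) with hq
      have hdq : dist p q < δ := by
        have h2 : dist p q ^ 2 = t ^ 2 := by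
          rw [Rsp.dist_sq]
          simp [hq, Rsp.px_mkR, Rsp.pt_mkR]
        nlinarith [dist_nonneg (x := p) (y := q)]
      have hqE : q ∈ E := hball q hdq
      have hqK : q ∈ Kc d r := by
        constructor
        · show ‖px q‖ < r
          rw [hq, Rsp.px_mkR]
          linarith
        · show |pt q| < r
          rw [hq, Rsp.pt_mkR]
          rw [abs_lt] at hpK2 ⊢
          constructor <;> nlinarith [hpK2.1, hpK2.2]
      have := (hup ⟨hqE, hqK⟩).1
      simpa [hq, Rsp.pt_mkR] using this
    by_contra hcon
    push_neg at hcon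
    set t : ℝ := (max 0 (γ - pt p) + δ) / 2 with ht
    have h1 : 0 ≤ max 0 (γ - pt p) := le_max_left _ _
    have h2 : max 0 (γ - pt p) < δ := max_lt hδ (by linarith)
    have h3 : γ - pt p ≤ max 0 (γ - pt p) := le_max_right _ _
    have := key t (by positivity) (by linarith)
    linarith
  · -- witness
    obtain ⟨y, hy, hyd⟩ := Metric.exists_mem_closure_infDist_eq_dist hcne p
    rw [hinf] at hyd
    refine ⟨y, hy, hyd.symm, ?_⟩
    by_contra hcon
    push_neg at hcon
    have hη : 0 < min δ (-γ - pt y) := lt_min hδ (by linarith)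
    obtain ⟨q, hqc, hqd⟩ := Metric.mem_closure_iff.mp hy _ hη
    have hq1 : |pt q - pt y| ≤ dist q y := Rsp.pt_dist_le q y
    have hq2 : ‖px q - px y‖ ≤ dist q y := Rsp.px_dist_le q y
    have hq3 : ‖px p - px y‖ ≤ dist p y := Rsp.px_dist_le p y
    have hq4 : |pt p - pt y| ≤ dist p y := Rsp.pt_dist_le p y
    rw [dist_comm y q] at hqd
    have hqd1 : dist q y < δ := lt_of_lt_of_le hqd (min_le_left _ _)
    have hqd2 : dist q y < -γ - pt y := lt_of_lt_of_le hqd (min_le_right _ _)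
    have hqK : q ∈ Kc d r := by
      constructor
      · show ‖px q‖ < r
        calc ‖px q‖ ≤ ‖px q - px y‖ + ‖px y‖ := by
              simpa using norm_add_le (px q - px y) (px y)
          _ ≤ dist q y + (‖px y - px p‖ + ‖px p‖) := by
              have := norm_add_le (px y - px p) (px p)
              simp only [sub_add_cancel] at this
              linarith
          _ < r := by
              rw [norm_sub_rev] at hq3
              rw [← hyd] at hq3
              linarith
      · show |pt q| < r
        have e1 : |pt q| ≤ |pt q - pt y| + |pt y| := by
          simpa using abs_add_le (pt q - pt y) (pt y)
        have e2 : |pt y| ≤ |pt y - pt p| + |pt p| := by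
          simpa using abs_add_le (pt y - pt p) (pt p)
        rw [abs_sub_comm] at hq4
        rw [← hyd] at hq4
        linarith
    have hqlow : pt q ≤ -γ := by
      have : pt q - pt y ≤ |pt q - pt y| := le_abs_self _
      linarith
    have hqE : q ∈ E := (hlow ⟨hqlow, hqK⟩).1
    exact hqc hqE

set_option maxHeartbeats 2000000 in
lemma osc_aux (d : ℕ) :
    ∃ c : ℝ, c ∈ Set.Ioo (0 : ℝ) 1 ∧
      ∀ (E : Set (Rsp d)) (γ r δ : ℝ), 0 < γ → γ < r → δ ∈ Set.Ioo 0 (r / 4) →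
        {x : Rsp d | pt x ≤ -γ} ∩ Kc d r ⊆ E ∩ Kc d r →
        E ∩ Kc d r ⊆ {x : Rsp d | pt x ≤ γ} ∩ Kc d r →
        γ / δ < c →
        ∀ x ∈ {x : Rsp d | sdist E x = -δ} ∩ Kc d (r - 2 * δ),
          ∀ z ∈ {x : Rsp d | sdist E x = -δ} ∩ Kc d (r - 2 * δ),
            pt x - pt z ≤ 100 * Real.sqrt (γ / δ) * ‖px x - px z‖ := by
  refine ⟨1 / 100, ⟨by norm_num, by norm_num⟩, ?_⟩
  intro E γ r δ hγ hγr hδm hlow hup hc x hx z hz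
  obtain ⟨hδ, hδr⟩ := hδm
  obtain ⟨hxS, hxK⟩ := hx
  obtain ⟨hzS, hzK⟩ := hz
  have hγδ : 100 * γ < δ := by
    rw [div_lt_div_iff₀ hδ (by norm_num)] at hc
    linarith
  -- slab bounds and witness for z
  obtain ⟨hxup, -⟩ := slab_and_witness hγ hδ hδr hlow hup hxS hxK
  obtain ⟨hzup, y, hy, hyd, hylow⟩ := slab_and_witness hγ hδ hδr hlow hup hzS hzK
  obtain ⟨-, hxinf⟩ := level_inf hδ hxS
  -- x is at distance ≥ δ from y
  have hxy : δ ≤ dist x y := by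
    have h1 : Metric.infDist x (closure Eᶜ) = δ := by
      rw [Metric.infDist_closure]; exact hxinf
    rw [← h1]
    exact Metric.infDist_le_dist_of_mem hy
  -- notation
  set t : ℝ := pt x - pt z with htdef
  set h : ℝ := ‖px x - px z‖ with hhdef
  set s : ℝ := pt y - pt z with hsdef
  set ω : ℝ := ‖px y - px z‖ with hωdef
  set g : ℝ := Real.sqrt (γ / δ) with hgdef
  set G : ℝ := Real.sqrt (γ * δ) with hGdef
  have hg0 : 0 ≤ g := Real.sqrt_nonneg _
  have hG0 : 0 ≤ G := Real.sqrt_nonneg _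
  have hh0 : 0 ≤ h := norm_nonneg _
  have hω0 : 0 ≤ ω := norm_nonneg _
  have hGg : G = g * δ := by
    rw [hGdef, hgdef, ← Real.sqrt_sq hδ.le, ← Real.sqrt_mul (by positivity)]
    congr 1
    field_simp
    ring
    rw [Real.sq_sqrt (by positivity)]
  have hgg : g * g = γ / δ := Real.mul_self_sqrt (by positivity)
  -- z lower bound
  have hzlow : -γ - δ ≤ pt z := by
    have h4 := Rsp.pt_dist_le z y
    have : pt y - pt z ≤ |pt z - pt y| := by
      rw [abs_sub_comm]; exact le_abs_self _
    rw [hyd] at h4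
    have h5 : pt z - pt y ≥ -δ := by
      have := neg_abs_le (pt z - pt y)
      linarith
    linarith
  -- t ≤ 2γ
  have ht2γ : t ≤ 2 * γ := by rw [htdef]; linarith
  rcases le_or_gt t 0 with htneg | htpos
  · have : 0 ≤ 100 * g * h := by positivity
    linarith
  -- f1 : ω² + s² = δ²
  have f1 : ω ^ 2 + s ^ 2 = δ ^ 2 := by
    have := Rsp.dist_sq z y
    rw [hyd] at this
    rw [hωdef, hsdef, norm_sub_rev]
    nlinarith [this]
  -- f3 : s ≥ δ - 2γ
  have f3 : δ - 2 * γ ≤ s := by rw [hsdef]; linarith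
  -- f5 : ω ≤ 2G
  have hG2 : G ^ 2 = γ * δ := Real.sq_sqrt (by positivity)
  have f5 : ω ≤ 2 * G := by
    have f5a : ω ^ 2 ≤ (2 * G) ^ 2 := by nlinarith [f1, f3, hG2, hγδ, hγ]
    calc ω = Real.sqrt (ω ^ 2) := (Real.sqrt_sq hω0).symm
      _ ≤ Real.sqrt ((2 * G) ^ 2) := Real.sqrt_le_sqrt f5a
      _ = 2 * G := Real.sqrt_sq (by positivity)
  -- f4 : δ² ≤ (h+ω)² + (t−s)²
  have f4 : δ ^ 2 ≤ (h + ω) ^ 2 + (t - s) ^ 2 := by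
    have hd := Rsp.dist_sq x y
    have htri : ‖px x - px y‖ ≤ h + ω := by
      have e : px x - px y = (px x - px z) + (px z - px y) := by abel
      rw [e]
      have e2 := norm_add_le (px x - px z) (px z - px y)
      rw [norm_sub_rev (px z) (px y)] at e2
      exact e2
    have hts : pt x - pt y = t - s := by rw [htdef, hsdef]; ring
    nlinarith [hxy, hd, norm_nonneg (px x - px y), dist_nonneg (x := x) (y := y)]
  -- key : 2 t s ≤ h² + 2 h ω + t²
  have key : 2 * t * s ≤ h ^ 2 + 2 * h * ω + t ^ 2 := by nlinarith [f4, f1]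
  rcases le_or_gt (G / 50) h with hbig | hsmall
  · -- big horizontal distance : use t ≤ 2γ
    have e1 : γ = g * g * δ := by rw [hgg]; field_simp
    have e2 : 2 * γ ≤ 100 * g * h := by
      calc 2 * γ = 100 * g * (g * δ / 50) := by rw [e1]; ring
        _ = 100 * g * (G / 50) := by rw [hGg]
        _ ≤ 100 * g * h := mul_le_mul_of_nonneg_left hbig (by positivity)
    linarith
  · -- small horizontal distance
    have k1 : 2 * t * (δ - 2 * γ) ≤ 2 * t * s :=
      mul_le_mul_of_nonneg_left f3 (by linarith)
    have k3 : 2 * h * ω ≤ 4 * h * G := by nlinarith [f5, hh0]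
    have k4 : h ^ 2 ≤ h * G := by nlinarith [hsmall.le, hh0, hG0]
    have k5 : t ^ 2 ≤ 2 * γ * t := by nlinarith [ht2γ, htpos]
    have k6 : 2 * t * (δ - 3 * γ) ≤ 5 * h * (g * δ) := by
      rw [← hGg]; nlinarith [key, k1, k3, k4, k5]
    have k7 : t * δ ≤ 2 * t * (δ - 3 * γ) := by nlinarith [htpos, hγδ]
    have k8 : t * δ ≤ 5 * (g * h) * δ := by nlinarith [k6, k7]
    have k9 : t ≤ 5 * (g * h) := le_of_mul_le_mul_right (by linarith) hδ
    nlinarith [mul_nonneg hg0 hh0]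

/-- oscillation bound for the level set of the distance function. -/
theorem oscillation_bound_for_distance_level_set (n : ℕ) (hn : 2 ≤ n) :
    ∃ c : ℝ, c ∈ Set.Ioo (0 : ℝ) 1 ∧
      ∀ (E : Set (Rsp (n - 1))) (γ r δ : ℝ), 0 < γ → γ < r → δ ∈ Set.Ioo 0 (r / 4) →
        {x : Rsp (n - 1) | pt x ≤ -γ} ∩ Kc (n - 1) r ⊆ E ∩ Kc (n - 1) r →
        E ∩ Kc (n - 1) r ⊆ {x : Rsp (n - 1) | pt x ≤ γ} ∩ Kc (n - 1) r →
        γ / δ < c →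
        ∀ x ∈ {x : Rsp (n - 1) | sdist E x = -δ} ∩ Kc (n - 1) (r - 2 * δ),
          ∀ z ∈ {x : Rsp (n - 1) | sdist E x = -δ} ∩ Kc (n - 1) (r - 2 * δ),
            pt x - pt z ≤ 100 * Real.sqrt (γ / δ) * ‖px x - px z‖ :=
  osc_aux (n - 1)
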